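/- Let A be an atomic set partition of [n] (n ≥ 1) with r blocks, and let γ be a set composition of [r]. Then γ[A] = A if and only if γ is the set composition with the single block [r]. Consequently, the coefficient of the basis element A in p(A) = ∑_{γ ∈ Γ'(r)} (−1)^{ℓ(γ)−1} γ[A] equals 1. -/

import Mathlib

/-!
Every `γ[A]` is a set partition of `[k]` for some `k`, and the size of a set partition is
determined by it. If `γ = (g, h, …)` has at least two letters, then
`γ[A] = std(A_g) | (h, …)[A]` with both factors nonempty, so `γ[A] = A` would split the
atomic `A`; the empty word gives `∅ ≠ A`, and a one-letter composition of `[r]` is `([r])`,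
for which `γ[A] = std(A) = A`. Hence only `γ = ([r])`, with sign `(-1)^0`, contributes to the
coefficient of `A` in the (finite) sum `p(A)`.
-/

open Finset

/-- `[n] = {1, …, n}` as a finset of naturals. -/
def seg (n : ℕ) : Finset ℕ := Finset.Icc 1 n

/-- A (raw) collection of blocks. -/
abbrev Blocks := Finset (Finset ℕ)

/-- The ground set (union of the blocks). -/
def ground (A : Blocks) : Finset ℕ := A.sup id

/-- `A` is a set partition of the finite set `X`: nonempty pairwise disjoint blocks with union `X`. -/
def IsPartitionOf (A : Blocks) (X : Finset ℕ) : Prop :=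
  (∀ B ∈ A, B.Nonempty) ∧ (A : Set (Finset ℕ)).PairwiseDisjoint id ∧ ground A = X

/-- `A` is a set partition of `[n]`. -/
def IsSP (A : Blocks) (n : ℕ) : Prop := IsPartitionOf A (seg n)

/-- The unique increasing bijection from `X` onto `[#X]`. -/
def stdFun (X : Finset ℕ) (x : ℕ) : ℕ := (X.filter (· < x)).card + 1

/-- Standardization of a collection of blocks. -/
def stdP (A : Blocks) : Blocks := A.image fun B => B.image (stdFun (ground A))

/-- Shift all entries of all blocks up by `k`. -/
def shiftP (A : Blocks) (k : ℕ) : Blocks := A.image fun B => B.image (· + k)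

/-- Concatenation `A | B` of set partitions: shift `B` up by the weight of `A`. -/
def concatP (A B : Blocks) : Blocks := A ∪ shiftP B (ground A).card

/-- The `i`-th block of `A` (1-based), where blocks are ordered by increasing minima. -/
def blockAt (A : Blocks) (i : ℕ) : Finset ℕ :=
  (A.filter fun B => (A.filter fun C => C.min ≤ B.min).card = i).sup id

/-- `A_J` : the subcollection of blocks of `A` indexed by `J`. -/
def subColl (A : Blocks) (J : Finset ℕ) : Blocks := J.image (blockAt A)

/-- `A` is an atomic set partition of `[n]`. -/
def IsAtomicSP (A : Blocks) (n : ℕ) : Prop :=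
  IsSP A n ∧ 1 ≤ n ∧
    ¬ ∃ m B C, 0 < m ∧ m < n ∧ IsSP B m ∧ IsSP C (n - m) ∧ A = concatP B C

/-- Raw set compositions: words whose letters are finsets of naturals. -/
abbrev SComp := List (Finset ℕ)

/-- The union of the letters of a word. -/
def sunion (γ : SComp) : Finset ℕ := γ.foldr (· ∪ ·) ∅

/-- `γ` is a set composition of `K`. -/
def IsSCompOf (γ : SComp) (K : Finset ℕ) : Prop :=
  (∀ B ∈ γ, B.Nonempty) ∧ γ.Pairwise Disjoint ∧ sunion γ = K

/-- `γ[A] = std(A_{γ₁}) | std(A_{γ₂}) | ⋯ | std(A_{γₛ})`. -/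
def applyComp (γ : SComp) (A : Blocks) : Blocks :=
  (γ.map fun g => stdP (subColl A g)).foldr concatP ∅

abbrev NCSym := Blocks →₀ ℚ

/-- The basis element of `NCSym` indexed by a set partition. -/
noncomputable def bas (A : Blocks) : NCSym := Finsupp.single A 1

/-- `p(A) = ∑_{γ ∈ Γ'(r)} (-1)^{ℓ(γ)-1} γ[A]`. -/
noncomputable def pNC (A : Blocks) (r : ℕ) : NCSym :=
  ∑ᶠ γ ∈ {γ : SComp | IsSCompOf γ (seg r) ∧ 1 ∈ γ.headI},
    ((-1 : ℚ) ^ (γ.length - 1)) • bas (applyComp γ A)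

open TensorProduct in
/-- `Δ(A) = ∑_{K ⊔ L = [r]} std(A_K) ⊗ std(A_L)` on a basis element. -/
noncomputable def deltaB (A : Blocks) : NCSym ⊗[ℚ] NCSym :=
  ∑ K ∈ (seg A.card).powerset,
    bas (stdP (subColl A K)) ⊗ₜ[ℚ] bas (stdP (subColl A (seg A.card \ K)))

/-- The coproduct of `NCSym`, extended linearly. -/
noncomputable def Delta : NCSym →ₗ[ℚ] TensorProduct ℚ NCSym NCSym :=
  Finsupp.lsum ℚ fun A => LinearMap.toSpanSingleton ℚ _ (deltaB A)


lemma mem_ground {A : Blocks} {a : ℕ} : a ∈ ground A ↔ ∃ B ∈ A, a ∈ B := by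
  simp [ground, Finset.mem_sup]

lemma subset_ground {A : Blocks} {B : Finset ℕ} (hB : B ∈ A) : B ⊆ ground A :=
  le_sup (f := id) hB

lemma ground_image_image (A : Blocks) (f : ℕ → ℕ) :
    ground (A.image (·.image f)) = (ground A).image f := by
  ext a
  simp only [mem_ground, mem_image]
  constructor
  · rintro ⟨_, ⟨B, hB, rfl⟩, ha⟩
    obtain ⟨x, hx, rfl⟩ := mem_image.1 ha
    exact ⟨x, ⟨B, hB, hx⟩, rfl⟩
  · rintro ⟨x, ⟨B, hB, hx⟩, rfl⟩
    exact ⟨_, ⟨B, hB, rfl⟩, mem_image_of_mem f hx⟩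

namespace IsPartitionOf

variable {A B : Blocks} {X Y : Finset ℕ}

lemma subset_of_mem (hA : IsPartitionOf A X) {C : Finset ℕ} (hC : C ∈ A) : C ⊆ X :=
  hA.2.2 ▸ subset_ground hC

lemma nonempty_iff (hA : IsPartitionOf A X) : A.Nonempty ↔ X.Nonempty := by
  constructor
  · rintro ⟨C, hC⟩
    exact (hA.1 C hC).mono (hA.subset_of_mem hC)
  · rintro ⟨x, hx⟩
    obtain ⟨C, hC, -⟩ := mem_ground.1 (hA.2.2 ▸ hx)
    exact ⟨C, hC⟩

lemma injOn_min (hA : IsPartitionOf A X) : Set.InjOn Finset.min (A : Set (Finset ℕ)) := by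
  intro B hB C hC h
  obtain ⟨b, hb⟩ := min_of_nonempty (hA.1 B hB)
  exact hA.2.1.elim_finset hB hC b (mem_of_min hb) (mem_of_min (h ▸ hb))

lemma of_subset (hA : IsPartitionOf A X) (h : B ⊆ A) : IsPartitionOf B (ground B) :=
  ⟨fun C hC => hA.1 C (h hC), hA.2.1.subset (by exact_mod_cast h), rfl⟩

lemma image (hA : IsPartitionOf A X) {f : ℕ → ℕ} (hf : Set.InjOn f X) :
    IsPartitionOf (A.image (·.image f)) (X.image f) := by
  refine ⟨?_, ?_, by rw [ground_image_image, hA.2.2]⟩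
  · simp only [mem_image, forall_exists_index, and_imp]
    rintro _ C hC rfl
    exact (hA.1 C hC).image f
  · simp only [coe_image]
    intro _ ⟨C, hC, hCD⟩ _ ⟨D, hD, hDE⟩ hne
    subst hCD hDE
    have hCD : C ≠ D := fun h => hne (h ▸ rfl)
    change Disjoint (C.image f) (D.image f)
    rw [← disjoint_coe, coe_image, coe_image]
    exact (disjoint_coe.2 (hA.2.1 hC hD hCD)).image hf (coe_subset.2 (hA.subset_of_mem hC))
      (coe_subset.2 (hA.subset_of_mem hD))

lemma union (hA : IsPartitionOf A X) (hB : IsPartitionOf B Y) (hXY : Disjoint X Y) :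
    IsPartitionOf (A ∪ B) (X ∪ Y) := by
  refine ⟨fun C hC => (mem_union.1 hC).elim (hA.1 C) (hB.1 C), ?_, ?_⟩
  · rw [coe_union, Set.pairwiseDisjoint_union]
    exact ⟨hA.2.1, hB.2.1, fun C hC D hD _ =>
      hXY.mono (hA.subset_of_mem hC) (hB.subset_of_mem hD)⟩
  · rw [ground, sup_union, ← ground, ← ground, hA.2.2, hB.2.2, sup_eq_union]

end IsPartitionOf

lemma card_seg (n : ℕ) : #(seg n) = n := by simp [seg]

lemma seg_nonempty_iff {n : ℕ} : (seg n).Nonempty ↔ 0 < n := by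
  simp only [seg, nonempty_Icc]
  omega

lemma isSP_empty : IsSP ∅ 0 := ⟨by simp, by simp, by simp [ground, seg]⟩

namespace IsSP

variable {A B : Blocks} {m n : ℕ}

lemma size_unique (hm : IsSP A m) (hn : IsSP A n) : m = n := by
  rw [← card_seg m, ← card_seg n, ← hm.2.2, hn.2.2]

lemma nonempty_iff (hA : IsSP A n) : A.Nonempty ↔ 0 < n :=
  (IsPartitionOf.nonempty_iff hA).trans seg_nonempty_iff

end IsSP

lemma stdFun_lt_stdFun {X : Finset ℕ} {x y : ℕ} (hx : x ∈ X) (hxy : x < y) :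
    stdFun X x < stdFun X y := by
  have : {z ∈ X | z < x} ⊂ {z ∈ X | z < y} :=
    ssubset_iff_of_subset (monotone_filter_right X fun _ _ h => h.trans hxy)
      |>.2 ⟨x, by simp [hx, hxy]⟩
  simpa [stdFun] using card_lt_card this

lemma stdFun_strictMonoOn (X : Finset ℕ) : StrictMonoOn (stdFun X) X :=
  fun _ hx _ _ hxy => stdFun_lt_stdFun hx hxy

lemma image_stdFun (X : Finset ℕ) : X.image (stdFun X) = seg #X := by
  refine eq_of_subset_of_card_le (fun a ha => ?_) ?_
  · obtain ⟨x, hx, rfl⟩ := mem_image.1 ha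
    have := card_lt_card ((filter_ssubset (p := (· < x))).2 ⟨x, hx, lt_irrefl x⟩)
    simp only [seg, mem_Icc, stdFun]
    omega
  · rw [card_seg, card_image_of_injOn (stdFun_strictMonoOn X).injOn]

lemma stdFun_seg {m x : ℕ} (hx : x ∈ seg m) : stdFun (seg m) x = x := by
  have : {y ∈ seg m | y < x} = Ico 1 x := by
    ext y
    simp only [seg, mem_filter, mem_Icc, mem_Ico] at hx ⊢
    omega
  simp only [seg, mem_Icc] at hx
  simp only [stdFun, this, Nat.card_Ico]
  omega

lemma IsPartitionOf.isSP_stdP {A : Blocks} {X : Finset ℕ} (hA : IsPartitionOf A X) :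
    IsSP (stdP A) #X := by
  rw [IsSP, ← image_stdFun, stdP, hA.2.2]
  exact hA.image (stdFun_strictMonoOn X).injOn

lemma IsSP.stdP_eq {A : Blocks} {m : ℕ} (hA : IsSP A m) : stdP A = A := by
  have hid : ∀ B ∈ A, B.image (stdFun (seg m)) = B := fun B hB =>
    (image_congr fun x hx => stdFun_seg (hA.subset_of_mem hB hx)).trans image_id'
  rw [stdP, hA.2.2, image_congr hid, image_id']

lemma seg_union_image_add_seg (m k : ℕ) : seg m ∪ (seg k).image (· + m) = seg (m + k) := by
  ext x
  simp only [seg, image_add_right_Icc, mem_union, mem_Icc]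
  omega

lemma disjoint_seg_image_add_seg (m k : ℕ) : Disjoint (seg m) ((seg k).image (· + m)) := by
  simp only [seg, image_add_right_Icc, disjoint_left, mem_Icc]
  omega

lemma IsSP.concatP {B C : Blocks} {m k : ℕ} (hB : IsSP B m) (hC : IsSP C k) :
    IsSP (concatP B C) (m + k) := by
  have hshift : IsPartitionOf (shiftP C m) ((seg k).image (· + m)) :=
    hC.image (add_left_injective m).injOn
  rw [IsSP, ← seg_union_image_add_seg, _root_.concatP, hB.2.2, card_seg]
  exact IsPartitionOf.union hB hshift (disjoint_seg_image_add_seg m k)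

/-- The index `i` for which `blockAt A i = B`: blocks are numbered by increasing minima. -/
def rank (A : Blocks) (B : Finset ℕ) : ℕ := #{C ∈ A | C.min ≤ B.min}

section Rank

variable {A : Blocks} {B C : Finset ℕ}

lemma rank_mem_seg (hB : B ∈ A) : rank A B ∈ seg #A := by
  simp only [seg, mem_Icc, rank]
  exact ⟨card_pos.2 ⟨B, mem_filter.2 ⟨hB, le_rfl⟩⟩, card_filter_le _ _⟩

lemma rank_lt_rank (hC : C ∈ A) (h : B.min < C.min) : rank A B < rank A C := by
  refine card_lt_card <| ssubset_iff_of_subset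
    (monotone_filter_right A fun _ _ hD => hD.trans h.le) |>.2
      ⟨C, mem_filter.2 ⟨hC, le_rfl⟩, fun hC' => (mem_filter.1 hC').2.not_gt h⟩

lemma rank_injOn (hA : Set.InjOn Finset.min (A : Set (Finset ℕ))) :
    Set.InjOn (rank A) (A : Set (Finset ℕ)) := by
  intro B hB C hC h
  rcases lt_trichotomy B.min C.min with hlt | heq | hgt
  · exact absurd h (rank_lt_rank hC hlt).ne
  · exact hA hB hC heq
  · exact absurd h (rank_lt_rank hB hgt).ne'

lemma blockAt_rank (hA : Set.InjOn Finset.min (A : Set (Finset ℕ))) (hB : B ∈ A) :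
    blockAt A (rank A B) = B := by
  have : {C ∈ A | rank A C = rank A B} = {B} := by
    ext C
    simp only [mem_filter, mem_singleton]
    exact ⟨fun ⟨hC, h⟩ => rank_injOn hA hC hB h, by rintro rfl; exact ⟨hB, rfl⟩⟩
  change {C ∈ A | rank A C = rank A B}.sup id = B
  rw [this, sup_singleton, id]

lemma subColl_seg (hA : Set.InjOn Finset.min (A : Set (Finset ℕ))) : subColl A (seg #A) = A := by
  have hsub : A ⊆ subColl A (seg #A) := fun B hB =>
    mem_image.2 ⟨rank A B, rank_mem_seg hB, blockAt_rank hA hB⟩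
  refine (eq_of_subset_of_card_le hsub ?_).symm
  calc #(subColl A (seg #A)) ≤ #(seg #A) := card_image_le
    _ = #A := card_seg _

lemma subColl_subset (hA : Set.InjOn Finset.min (A : Set (Finset ℕ))) {g : Finset ℕ}
    (hg : g ⊆ seg #A) : subColl A g ⊆ A :=
  (image_subset_image hg).trans (subColl_seg hA).subset

end Rank

lemma mem_sunion {γ : SComp} {a : ℕ} : a ∈ sunion γ ↔ ∃ g ∈ γ, a ∈ g := by
  induction γ <;> simp_all [sunion]

lemma sunion_cons (g : Finset ℕ) (t : SComp) : sunion (g :: t) = g ∪ sunion t := rfl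

lemma subset_sunion {γ : SComp} {g : Finset ℕ} (hg : g ∈ γ) : g ⊆ sunion γ :=
  fun _ ha => mem_sunion.2 ⟨g, hg, ha⟩

lemma length_le_card_sunion {γ : SComp} (hne : ∀ g ∈ γ, g.Nonempty) (hd : γ.Pairwise Disjoint) :
    γ.length ≤ #(sunion γ) := by
  induction γ with
  | nil => simp
  | cons g t ih =>
    rw [List.pairwise_cons] at hd
    have hdisj : Disjoint g (sunion t) := disjoint_right.2 fun a ha hag => by
      obtain ⟨g', hg', hag'⟩ := mem_sunion.1 ha
      exact disjoint_left.1 (hd.1 g' hg') hag hag'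
    have hg := (hne g List.mem_cons_self).card_pos
    have ht := ih (fun g' hg' => hne g' (List.mem_cons_of_mem g hg')) hd.2
    rw [List.length_cons, sunion_cons, card_union_of_disjoint hdisj]
    omega

lemma setOf_isSCompOf_finite (K : Finset ℕ) : {γ : SComp | IsSCompOf γ K}.Finite := by
  refine ((List.finite_length_le K.powerset #K).image (List.map Subtype.val)).subset ?_
  rintro γ ⟨hne, hd, rfl⟩
  refine ⟨γ.attach.map fun g => ⟨g.1, mem_powerset.2 (subset_sunion g.2)⟩, ?_, ?_⟩
  · simpa using length_le_card_sunion hne hd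
  · simp [List.map_map]

section ApplyComp

variable {A : Blocks} {X : Finset ℕ}

lemma applyComp_cons (g : Finset ℕ) (t : SComp) (A : Blocks) :
    applyComp (g :: t) A = concatP (stdP (subColl A g)) (applyComp t A) := rfl

lemma IsPartitionOf.isSP_stdP_subColl (hA : IsPartitionOf A X) {g : Finset ℕ}
    (hg : g ⊆ seg #A) : IsSP (stdP (subColl A g)) #(ground (subColl A g)) :=
  (hA.of_subset (subColl_subset hA.injOn_min hg)).isSP_stdP

lemma IsPartitionOf.exists_isSP_applyComp (hA : IsPartitionOf A X) {γ : SComp}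
    (hγ : ∀ g ∈ γ, g ⊆ seg #A) : ∃ k, IsSP (applyComp γ A) k := by
  induction γ with
  | nil => exact ⟨0, isSP_empty⟩
  | cons g t ih =>
    obtain ⟨k, hk⟩ := ih fun g' hg' => hγ g' (List.mem_cons_of_mem g hg')
    exact ⟨_, (hA.isSP_stdP_subColl (hγ g List.mem_cons_self)).concatP hk⟩

lemma stdP_subColl_nonempty {g : Finset ℕ} (hg : g.Nonempty) :
    (stdP (subColl A g)).Nonempty :=
  (hg.image _).image _

lemma applyComp_cons_nonempty {g : Finset ℕ} {t : SComp} (hg : g.Nonempty) :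
    (applyComp (g :: t) A).Nonempty :=
  (stdP_subColl_nonempty hg).mono subset_union_left

lemma IsSP.applyComp_singleton_seg {n : ℕ} (hA : IsSP A n) : applyComp [seg #A] A = A := by
  rw [applyComp_cons, subColl_seg (IsPartitionOf.injOn_min hA), hA.stdP_eq]
  simp [applyComp, _root_.concatP, shiftP]

end ApplyComp

namespace IsAtomicSP

variable {A : Blocks} {n : ℕ}

/-- `γ[A] = std(A_g) | (h :: t)[A]` with both factors nonempty would split the atomic `A`. -/
lemma applyComp_cons_cons_ne (hatom : IsAtomicSP A n) {g h : Finset ℕ} {t : SComp}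
    (hγ : ∀ g' ∈ g :: h :: t, g' ⊆ seg #A) (hg : g.Nonempty) (hh : h.Nonempty) :
    applyComp (g :: h :: t) A ≠ A := by
  intro hfix
  obtain ⟨hA, -, hsplit⟩ := hatom
  have hB := IsPartitionOf.isSP_stdP_subColl hA (hγ g List.mem_cons_self)
  obtain ⟨k, hC⟩ := IsPartitionOf.exists_isSP_applyComp hA
    fun g' hg' => hγ g' (List.mem_cons_of_mem g hg')
  have hm := hB.nonempty_iff.1 (stdP_subColl_nonempty hg)
  have hk := hC.nonempty_iff.1 (applyComp_cons_nonempty hh)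
  have hn := (hB.concatP hC).size_unique (hfix ▸ hA)
  refine hsplit ⟨_, _, _, hm, by omega, hB, ?_, hfix.symm⟩
  rwa [← hn, Nat.add_sub_cancel_left]

lemma applyComp_eq_self_iff (hatom : IsAtomicSP A n) {γ : SComp}
    (hγ : IsSCompOf γ (seg #A)) : applyComp γ A = A ↔ γ = [seg #A] := by
  obtain ⟨hne, -, hunion⟩ := hγ
  refine ⟨fun hfix => ?_, fun h => h ▸ hatom.1.applyComp_singleton_seg⟩
  have hsub : ∀ g ∈ γ, g ⊆ seg #A := fun g hg => hunion ▸ subset_sunion hg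
  match γ with
  | [] =>
    exact ((hatom.1.nonempty_iff.2 hatom.2.1).ne_empty hfix.symm).elim
  | [g] => simpa [sunion] using hunion
  | g :: h :: t =>
    exact absurd hfix (hatom.applyComp_cons_cons_ne hsub (hne g (by simp)) (hne h (by simp)))

end IsAtomicSP

lemma pNC_apply_self {A : Blocks} {r : ℕ} (hr : 0 < r)
    (hfix : ∀ γ, IsSCompOf γ (seg r) → (applyComp γ A = A ↔ γ = [seg r])) :
    pNC A r A = 1 := by
  have hS : {γ : SComp | IsSCompOf γ (seg r) ∧ 1 ∈ γ.headI}.Finite :=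
    (setOf_isSCompOf_finite (seg r)).subset fun γ hγ => hγ.1
  have hseg : IsSCompOf [seg r] (seg r) :=
    ⟨by simpa using seg_nonempty_iff.2 hr, by simp, by simp [sunion]⟩
  have hone : [seg r] ∈ hS.toFinset := by
    rw [hS.mem_toFinset]
    exact ⟨hseg, by simp [seg]; omega⟩
  rw [pNC, ← hS.coe_toFinset, finsum_mem_coe_finset, Finset.sum_apply',
    sum_eq_single_of_mem _ hone]
  · simp [bas, (hfix _ hseg).2 rfl]
  · intro γ hγ hne
    simp [bas, mt (hfix γ (hS.mem_toFinset.1 hγ).1).1 hne]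

theorem ncsym_pA_leading_coefficient_general (n r : ℕ) (A : Blocks)
    (hr : A.card = r) (hatom : IsAtomicSP A n) :
    (∀ γ : SComp, IsSCompOf γ (seg r) → (applyComp γ A = A ↔ γ = [seg r])) ∧
    pNC A r A = 1 := by
  subst hr
  have hfix := fun γ => hatom.applyComp_eq_self_iff (γ := γ)
  exact ⟨hfix, pNC_apply_self (card_pos.2 (hatom.1.nonempty_iff.2 hatom.2.1)) hfix⟩

/-- For an atomic set partition `A` of `[n]` (`n ≥ 1`) with `r` blocks and a
set composition `γ` of `[r]`, `γ[A] = A` iff `γ` is the one-block composition `([r])`.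
Consequently the coefficient of the basis element `A` in `p(A)` equals `1`. -/
theorem ncsym_pA_leading_coefficient (n r : ℕ) (hn : 1 ≤ n) (A : Blocks)
    (hA : IsSP A n) (hr : A.card = r) (hatom : IsAtomicSP A n) :
    (∀ γ : SComp, IsSCompOf γ (seg r) → (applyComp γ A = A ↔ γ = [seg r])) ∧
    pNC A r A = 1 :=
  ncsym_pA_leading_coefficient_general n r A hr hatom
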